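/- Let Σ = Σ(G) be the sofic subshift of a labelled graph G and let x, y ∈ Σ. Then (x, y) lies in the chain relation of (Σ, σ) if and only if ω(x) ≤ α(y) in the component order of the linking graph G/≈, or y = σⁿ(x) for some n > 0. -/

import Mathlib

/-! Common definitions: labelled graphs, walks, follower sets, the linking
relation, subshifts over `ℤ → A`, chains, and attractors. -/

structure LGraph (A : Type) where
  V : Type
  E : Type
  [finV : Finite V]
  [finE : Finite E]
  s : E → V
  t : E → V
  lab : E → A

attribute [instance] LGraph.finV LGraph.finE

namespace LGraph

variable {A : Type}

/-- `Walk G u v es` : the list of edges `es` forms a walk from `u` to `v`. -/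
inductive Walk (G : LGraph A) : G.V → G.V → List G.E → Prop
  | nil (v : G.V) : Walk G v v []
  | cons {w : G.V} {es : List G.E} (e : G.E) (h : Walk G (G.t e) w es) :
      Walk G (G.s e) w (e :: es)

/-- There is an edge from `u` to `v`. -/
def EdgeRel (G : LGraph A) (u v : G.V) : Prop := ∃ e : G.E, G.s e = u ∧ G.t e = v

/-- `v` is reachable from `u` by a directed walk. -/
def Reach (G : LGraph A) : G.V → G.V → Prop := Relation.ReflTransGen G.EdgeRel

/-- `u` and `v` lie in the same strongly connected component. -/
def SameComp (G : LGraph A) (u v : G.V) : Prop := G.Reach u v ∧ G.Reach v u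

/-- The number of strongly connected components of `G`. -/
noncomputable def numComponents (G : LGraph A) : ℕ :=
  Nat.card {K : Set G.V // ∃ v : G.V, K = {u : G.V | G.SameComp v u}}

/-- The restricted follower set of `v` : words labelling walks starting at `v`
that stay inside the strongly connected component of `v`. -/
def FollowR (G : LGraph A) (v : G.V) : Set (List A) :=
  {w | ∃ (u : G.V) (es : List G.E), G.Walk v u es ∧ es.map G.lab = w ∧
        ∀ e ∈ es, G.SameComp v (G.s e) ∧ G.SameComp v (G.t e)}

/-- Two vertices are linked iff their restricted follower sets have infinite
intersection. -/
def Linked (G : LGraph A) (u v : G.V) : Prop := (G.FollowR u ∩ G.FollowR v).Infinite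

/-- `≈` : the reflexive-transitive closure of the linked relation. -/
def Approx (G : LGraph A) : G.V → G.V → Prop := Relation.ReflTransGen G.Linked

/-- One step in the linking graph `G/≈` (lifted to `G`): either an edge of `G`
or a jump between linked vertices. -/
def GenStep (G : LGraph A) (u v : G.V) : Prop := G.EdgeRel u v ∨ G.Linked u v

/-- Reachability in the linking graph `G/≈`, expressed on vertices of `G`. -/
def GenReach (G : LGraph A) : G.V → G.V → Prop := Relation.ReflTransGen G.GenStep

/-- The language of `G` : words labelling finite walks in `G`. -/
def Lang (G : LGraph A) : Set (List A) :=
  {w | ∃ (u v : G.V) (es : List G.E), G.Walk u v es ∧ es.map G.lab = w}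

/-- `w` has a presentation in the subgraph of `G` induced by the vertex set `S`. -/
def PresIn (G : LGraph A) (S : Set G.V) (w : List A) : Prop :=
  ∃ (u v : G.V) (es : List G.E), G.Walk u v es ∧ es.map G.lab = w ∧
    u ∈ S ∧ v ∈ S ∧ ∀ e ∈ es, G.s e ∈ S ∧ G.t e ∈ S

/-- A presentation of the first `n` letters of `w`, with explicit vertex
sequence `v` and edge sequence `e`. -/
def PresFun (G : LGraph A) (n : ℕ) (w : ℕ → A) (v : ℕ → G.V) (e : ℕ → G.E) : Prop :=
  ∀ i < n, G.s (e i) = v i ∧ G.t (e i) = v (i + 1) ∧ G.lab (e i) = w i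

/-- `S` is a union of `≈`-equivalence classes, i.e. `S = π⁻¹(π(S))` for the
projection `π : G → G/≈`. -/
def SaturatedSet (G : LGraph A) (S : Set G.V) : Prop :=
  ∀ u v : G.V, G.Approx u v → (u ∈ S ↔ v ∈ S)

/-- No edge leaves `S` : together with saturation this says that the image of
`S` in `G/≈` is a terminal subgraph. -/
def ForwardClosed (G : LGraph A) (S : Set G.V) : Prop :=
  ∀ e : G.E, G.s e ∈ S → G.t e ∈ S

/-- Every vertex has an ingoing and an outgoing edge. -/
def Essential (G : LGraph A) : Prop :=
  ∀ v : G.V, (∃ e : G.E, G.t e = v) ∧ (∃ e : G.E, G.s e = v)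

/-- A biinfinite presentation of `x` (vertex sequence `v`, edge sequence `e`)
staying in the vertex set `S`. -/
def BiPresIn (G : LGraph A) (S : Set G.V) (x : ℤ → A) (v : ℤ → G.V) (e : ℤ → G.E) : Prop :=
  ∀ i : ℤ, G.s (e i) = v i ∧ G.t (e i) = v (i + 1) ∧ G.lab (e i) = x i ∧ v i ∈ S

/-- The subshift of biinfinite label sequences of biinfinite walks of `G`
staying in `S`. -/
def SigmaIn (G : LGraph A) (S : Set G.V) : Set (ℤ → A) :=
  {x | ∃ v e, G.BiPresIn S x v e}

/-- The sofic subshift `Σ(G)`. -/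
def Sigma' (G : LGraph A) : Set (ℤ → A) := G.SigmaIn Set.univ

/-- The linking graph `G/≈` is strongly connected. -/
def StronglyConnectedQuot (G : LGraph A) : Prop := ∀ u v : G.V, G.GenReach u v

/-- The linking graph `G/≈` is periodic : its vertices can be partitioned into
`n > 1` classes (indexed by `ZMod n`, each a union of `≈`-classes) so that every
edge advances the class index by one. -/
def PeriodicQuot (G : LGraph A) : Prop :=
  ∃ n : ℕ, 1 < n ∧ ∃ c : G.V → ZMod n,
    (∀ u v : G.V, G.Approx u v → c u = c v) ∧ ∀ e : G.E, c (G.t e) = c (G.s e) + 1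

/-- The label product `G * H`. -/
def labelProduct (G H : LGraph A) : LGraph A where
  V := G.V × H.V
  E := {p : G.E × H.E // G.lab p.1 = H.lab p.2}
  s := fun p => (G.s p.1.1, H.s p.1.2)
  t := fun p => (G.t p.1.1, H.t p.1.2)
  lab := fun p => G.lab p.1.1

end LGraph

section Subshift

variable {A : Type}

/-- The shift map `σ`. -/
def shift (x : ℤ → A) : ℤ → A := fun i => x (i + 1)

open Classical in
/-- The metric `ρ(x,y) = 2^{-n}` where `n` is minimal with `x_n ≠ y_n` or
`x_{-n} ≠ y_{-n}` (and `ρ(x,x) = 0`). -/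
noncomputable def rho (x y : ℤ → A) : ℝ :=
  if x = y then 0
  else (2 : ℝ) ^ (-((sInf {n : ℕ | ∃ i : ℤ, i.natAbs = n ∧ x i ≠ y i} : ℕ) : ℤ))

/-- Closedness with respect to the metric `rho`. -/
def RhoClosed (Sig : Set (ℤ → A)) : Prop :=
  ∀ x : ℤ → A, (∀ ε : ℝ, 0 < ε → ∃ y ∈ Sig, rho x y < ε) → x ∈ Sig

/-- A subshift : a closed, strongly shift-invariant subset of `A^ℤ`. -/
def IsSubshift (Sig : Set (ℤ → A)) : Prop :=
  RhoClosed Sig ∧ shift '' Sig = Sig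

/-- The language of the subshift `Sig` : all finite factors of its points. -/
def lang (Sig : Set (ℤ → A)) : Set (List A) :=
  {w | ∃ x ∈ Sig, ∃ k : ℤ, ∀ (i : ℕ) (h : i < w.length), w.get ⟨i, h⟩ = x (k + i)}

/-- The central factor `x_{[-l,l]}` of a biinfinite word. -/
def central (x : ℤ → A) (l : ℕ) : List A :=
  (List.range (2 * l + 1)).map fun i => x ((i : ℤ) - (l : ℤ))

/-- `ChainWord L u v n w` : `w` is a chain of length `n` from `u` to `v` in the
language `L` : `|w| = n + |u|`, `w` has prefix `u` and suffix `v`, and every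
factor of `w` of length at most `|u|` belongs to `L`. -/
def ChainWord (L : Set (List A)) (u v : List A) (n : ℕ) (w : List A) : Prop :=
  u.length = v.length ∧ w.length = n + u.length ∧
  w.take u.length = u ∧ w.drop n = v ∧
  ∀ z : List A, z <:+: w → z.length ≤ u.length → z ∈ L

/-- An `ε`-chain of length `n > 0` from `x` to `y` inside `Sig`. -/
def EpsChain (Sig : Set (ℤ → A)) (ε : ℝ) (n : ℕ) (x y : ℤ → A) : Prop :=
  0 < n ∧ ∃ z : ℕ → ℤ → A, z 0 = x ∧ z n = y ∧ (∀ i ≤ n, z i ∈ Sig) ∧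
    ∀ i < n, rho (shift (z i)) (z (i + 1)) < ε

/-- The chain relation of `(Sig, σ)`. -/
def ChainRel (Sig : Set (ℤ → A)) (x y : ℤ → A) : Prop :=
  ∀ ε : ℝ, 0 < ε → ∃ n : ℕ, EpsChain Sig ε n x y

/-- Chain-transitivity. -/
def ChainTransitive (Sig : Set (ℤ → A)) : Prop :=
  ∀ x ∈ Sig, ∀ y ∈ Sig, ChainRel Sig x y

/-- Chain-mixing. -/
def ChainMixing (Sig : Set (ℤ → A)) : Prop :=
  ∀ x ∈ Sig, ∀ y ∈ Sig, ∀ ε : ℝ, 0 < ε → ∃ k : ℕ, ∀ n, k < n → EpsChain Sig ε n x y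

/-- Distance from a point to a set, with respect to `rho`. -/
noncomputable def distTo (x : ℤ → A) (Y : Set (ℤ → A)) : ℝ := sInf (rho x '' Y)

/-- `Y` is an attractor of the dynamical system `(Sig, σ)`. -/
def IsAttractor (Sig Y : Set (ℤ → A)) : Prop :=
  Y.Nonempty ∧ Y ⊆ Sig ∧ RhoClosed Y ∧ shift '' Y = Y ∧
  (∀ ε : ℝ, 0 < ε → ∃ δ : ℝ, 0 < δ ∧ ∀ x ∈ Sig, distTo x Y < δ →
    ∀ n : ℕ, 0 < n → distTo (shift^[n] x) Y < ε) ∧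
  (∃ δ : ℝ, 0 < δ ∧ ∀ x ∈ Sig, distTo x Y < δ →
    Filter.Tendsto (fun n : ℕ => distTo (shift^[n] x) Y) Filter.atTop (nhds 0))

end Subshift

/-! If `ω(x) ≤ α(y)`, an `ε`-chain runs along the presentation of `x` into `ω(x)`, then along
a path of `G/≈` to `α(y)`, and enters the presentation of `y` far in its past. Edges of `G` are
simply followed; a link `u ≈ c` is crossed by reading a long word common to closed walks at `u`
and at `c`, so that the jump is `ε`-small. Positive shifts are chain related trivially.

Conversely let `S` be the set of vertices reachable from `ω(x)` in `G/≈`. A path reading the same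
`D` labels as a path in `S` is itself in `S` afterwards, for a fixed `D`: on a long stretch both
paths stay in strongly connected components, and a long common word of the restricted follower
sets forces the two vertices to be linked. Along an `ε`-chain starting at `x`, every presentation
of the current point is therefore in `S` from a time that moves back by one for every `D + 1`
links. A long chain thus puts `α(y)` into `S`, while chains of bounded length force
`y = σⁿ x`. -/

section Subshift

variable {A : Type}

open Relation

lemma shift_iterate_apply (x : ℤ → A) (n : ℕ) (t : ℤ) : shift^[n] x t = x (t + n) := by
  induction n generalizing x with
  | zero => simp
  | succ n ih =>
    rw [Function.iterate_succ_apply, ih, shift]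
    push_cast
    ring_nf

lemma rho_lt_two_zpow_iff {x y : ℤ → A} {l : ℕ} :
    rho x y < 2 ^ (-(l : ℤ)) ↔ ∀ i : ℤ, i.natAbs ≤ l → x i = y i := by
  unfold rho
  split_ifs with hxy
  · simp [hxy]
  · set D := {n : ℕ | ∃ i : ℤ, i.natAbs = n ∧ x i ≠ y i}
    rw [zpow_lt_zpow_iff_right₀ one_lt_two, neg_lt_neg_iff, Nat.cast_lt]
    constructor
    · intro h i hi
      by_contra hne
      have := Nat.sInf_le (s := D) ⟨i, rfl, hne⟩
      omega
    · intro h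
      obtain ⟨i, hi⟩ := Function.ne_iff.1 hxy
      obtain ⟨j, hj, hne⟩ := Nat.sInf_mem (s := D) ⟨_, i, rfl, hi⟩
      by_contra hle
      exact hne (h j (by omega))

def ChainStep (Sig : Set (ℤ → A)) (l : ℕ) (a b : ℤ → A) : Prop :=
  a ∈ Sig ∧ b ∈ Sig ∧ ∀ i : ℤ, i.natAbs ≤ l → shift a i = b i

lemma exists_epsChain_of_transGen {Sig : Set (ℤ → A)} {l : ℕ} {ε : ℝ}
    (hε : 2 ^ (-(l : ℤ)) ≤ ε) {x y : ℤ → A} (h : TransGen (ChainStep Sig l) x y) :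
    ∃ n, EpsChain Sig ε n x y := by
  have hρ : ∀ {a b}, ChainStep Sig l a b → rho (shift a) b < ε := fun hab =>
    (rho_lt_two_zpow_iff.2 hab.2.2).trans_le hε
  induction h with
  | @single b hxb =>
    refine ⟨1, one_pos, fun i => if i = 0 then x else b, rfl, rfl, fun i hi => ?_,
      fun i hi => ?_⟩
    · interval_cases i <;> simp [hxb.1, hxb.2.1]
    · obtain rfl : i = 0 := by omega
      simpa using hρ hxb
  | @tail b c _ hbc ih =>
    obtain ⟨n, hn, z, hz0, hzn, hzmem, hzρ⟩ := ih
    refine ⟨n + 1, n.succ_pos, fun i => if i ≤ n then z i else c, by simp [hz0], by simp,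
      fun i hi => ?_, fun i hi => ?_⟩
    · by_cases hin : i ≤ n
      · simpa [hin] using hzmem i hin
      · simpa [hin] using hbc.2.1
    · by_cases hin : i + 1 ≤ n
      · simpa [hin, show i ≤ n by omega] using hzρ i hin
      · obtain rfl : i = n := by omega
        simpa [hzn] using hρ hbc

lemma chainRel_of_forall_transGen {Sig : Set (ℤ → A)} {x y : ℤ → A}
    (h : ∀ l : ℕ, TransGen (ChainStep Sig l) x y) : ChainRel Sig x y := by
  intro ε hε
  obtain ⟨l, hl⟩ := exists_pow_lt_of_lt_one hε (one_half_lt_one (α := ℝ))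
  exact exists_epsChain_of_transGen (by simpa [zpow_neg, zpow_natCast] using hl.le) (h l)

lemma chain_apply_add {z : ℕ → ℤ → A} {n l : ℕ}
    (hz : ∀ i < n, ∀ t : ℤ, t.natAbs ≤ l → z (i + 1) t = z i (t + 1)) {i k : ℕ}
    (hik : i + k ≤ n) {t : ℤ} (ht₁ : -l ≤ t) (ht₂ : t + k ≤ l) :
    z (i + k) t = z i (t + k) := by
  induction k generalizing t with
  | zero => simp
  | succ k ih =>
    push_cast at ht₂ ⊢
    rw [← add_assoc, hz (i + k) (by omega) t (by omega), ih (by omega) (by omega) (by omega)]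
    ring_nf

lemma exists_iterate_shift_eq {x y : ℤ → A} {K : ℕ}
    (h : ∀ L : ℕ, ∃ n, 0 < n ∧ n < K ∧ ∀ t : ℤ, t.natAbs ≤ L → y t = x (t + n)) :
    ∃ n, 0 < n ∧ shift^[n] x = y := by
  by_contra! hne
  have hwit : ∀ n : ℕ, ∃ t : ℤ, 0 < n → y t ≠ x (t + n) := fun n => by
    by_cases hn : 0 < n
    · obtain ⟨t, ht⟩ := Function.ne_iff.1 (hne n hn)
      exact ⟨t, fun _ => by rw [shift_iterate_apply] at ht; exact Ne.symm ht⟩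
    · exact ⟨0, fun h => absurd h hn⟩
  choose t ht using hwit
  obtain ⟨n, hn, hnK, hyx⟩ := h (∑ m ∈ Finset.range K, (t m).natAbs)
  exact ht n hn (hyx _ (Finset.single_le_sum (f := fun m => (t m).natAbs)
    (fun _ _ => Nat.zero_le _) (Finset.mem_range.2 hnK)))

end Subshift

lemma exists_frequently_eq {V : Type} [Finite V] (f : ℤ → V) :
    ∃ N, ∀ i, ∃ j, i ≤ j ∧ f j = f N := by
  obtain ⟨u, hu⟩ := Filter.frequently_exists (p := fun u i => f i = u) |>.1
    (.of_forall (f := Filter.atTop) fun i => ⟨f i, rfl⟩)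
  obtain ⟨N, -, hN⟩ := Filter.frequently_atTop.1 hu 0
  refine ⟨N, fun i => ?_⟩
  obtain ⟨j, hij, hj⟩ := Filter.frequently_atTop.1 hu i
  exact ⟨j, hij, hj.trans hN.symm⟩

namespace LGraph

variable {A : Type} {G : LGraph A}

open Relation

lemma genReach_of_reach {a b : G.V} (h : G.Reach a b) : G.GenReach a b :=
  ReflTransGen.mono (fun _ _ => Or.inl) _ _ h

lemma Walk.append {a b c : G.V} {es fs : List G.E} (h₁ : G.Walk a b es) (h₂ : G.Walk b c fs) :
    G.Walk a c (es ++ fs) := by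
  induction h₁ with
  | nil => exact h₂
  | cons e _ ih => exact .cons e (ih h₂)

lemma exists_walk_of_reach {a b : G.V} (h : G.Reach a b) : ∃ es, G.Walk a b es := by
  induction h using ReflTransGen.head_induction_on with
  | refl => exact ⟨[], .nil _⟩
  | head hab _ ih =>
    obtain ⟨e, rfl, rfl⟩ := hab
    obtain ⟨es, hes⟩ := ih
    exact ⟨e :: es, .cons e hes⟩

lemma Walk.reach_of_forall_mem {a b c : G.V} {es : List G.E} (h : G.Walk a b es)
    (hac : G.Reach a c) (hes : ∀ e ∈ es, G.Reach (G.t e) c) : G.Reach b c := by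
  induction h with
  | nil => exact hac
  | cons e _ ih => exact ih (hes e (by simp)) fun f hf => hes f (by simp [hf])

lemma Walk.eq_of_nil {a b : G.V} (h : G.Walk a b []) : a = b := by
  cases h
  rfl

lemma Walk.s_getElem_zero {a b : G.V} {es : List G.E} (h : G.Walk a b es)
    (hes : 0 < es.length) : G.s es[0] = a := by
  cases h with
  | nil => simp at hes
  | cons => rfl

lemma Walk.t_getElem {a b : G.V} {es : List G.E} (h : G.Walk a b es) {i : ℕ}
    (hi : i < es.length) : G.t es[i] = if hi' : i + 1 < es.length then G.s es[i + 1] else b := by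
  induction h generalizing i with
  | nil => simp at hi
  | @cons w es e h ih =>
    cases i with
    | zero =>
      rcases es with _ | ⟨f, es⟩
      · simpa using h.eq_of_nil
      · exact (h.s_getElem_zero (by simp)).symm
    | succ i => simpa using ih (i := i) (by simpa using hi)

lemma exists_closed_walk_of_mem_followR {u : G.V} {w : List A} (hw : w ∈ G.FollowR u) :
    ∃ es fs, G.Walk u u (es ++ fs) ∧ es.map G.lab = w := by
  obtain ⟨u', es, hes, rfl, hcomp⟩ := hw
  obtain ⟨fs, hfs⟩ := exists_walk_of_reach
    (hes.reach_of_forall_mem .refl fun e he => (hcomp e he).2.2)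
  exact ⟨es, fs, hes.append hfs, rfl⟩

lemma Linked.exists_le_length {u c : G.V} (h : G.Linked u c) (L : ℕ) :
    ∃ w ∈ G.FollowR u ∩ G.FollowR c, L ≤ w.length := by
  by_contra! hshort
  refine h (((List.finite_length_lt G.E L).image (List.map G.lab)).subset fun w hw => ?_)
  obtain ⟨_, es, _, rfl, _⟩ := hw.1
  exact ⟨es, by simpa using hshort _ hw, rfl⟩

def IsPath (G : LGraph A) (p : ℤ → G.E) : Prop := ∀ i, G.t (p i) = G.s (p (i + 1))

def IsRay (G : LGraph A) (r : ℕ → G.E) : Prop := ∀ i, G.t (r i) = G.s (r (i + 1))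

def pointAt (G : LGraph A) (p : ℤ → G.E) (k : ℤ) : ℤ → A := fun i => G.lab (p (i + k))

section Paths

variable {p : ℤ → G.E}

lemma IsPath.comp_add (hp : G.IsPath p) (k : ℤ) : G.IsPath fun i => p (i + k) := fun i => by
  rw [hp, add_right_comm]

lemma IsPath.isRay (hp : G.IsPath p) (k : ℤ) : G.IsRay fun i : ℕ => p (k + i) := fun i => by
  rw [hp]
  push_cast
  rw [add_assoc]

lemma IsPath.reach (hp : G.IsPath p) {i j : ℤ} (hij : i ≤ j) :
    G.Reach (G.s (p i)) (G.s (p j)) := by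
  obtain ⟨k, rfl⟩ := Int.exists_add_of_le hij
  induction k with
  | zero =>
    rw [Nat.cast_zero, add_zero]
    exact .refl
  | succ k ih => exact (ih (by omega)).tail ⟨p (i + k), rfl, by rw [hp]; push_cast; ring_nf⟩

lemma IsPath.pointAt_mem (hp : G.IsPath p) (k : ℤ) : G.pointAt p k ∈ G.Sigma' :=
  ⟨fun i => G.s (p (i + k)), fun i => p (i + k), fun i =>
    ⟨rfl, by rw [hp, add_right_comm], rfl, trivial⟩⟩

lemma IsPath.biPresIn (hp : G.IsPath p) :
    G.BiPresIn Set.univ (G.pointAt p 0) (fun i => G.s (p i)) p := fun i =>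
  ⟨rfl, hp i, by simp [pointAt], trivial⟩

lemma BiPresIn.isPath {x : ℤ → A} {v : ℤ → G.V} (h : G.BiPresIn Set.univ x v p) :
    G.IsPath p :=
  fun i => by rw [(h i).2.1, (h (i + 1)).1]

lemma BiPresIn.pointAt_eq {x : ℤ → A} {v : ℤ → G.V} (h : G.BiPresIn Set.univ x v p) :
    G.pointAt p 0 = x :=
  funext fun i => by simpa [pointAt] using (h i).2.2.1

lemma BiPresIn.vertex_eq {x : ℤ → A} {v : ℤ → G.V} (h : G.BiPresIn Set.univ x v p) :
    v = fun i => G.s (p i) :=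
  funext fun i => ((h i).1).symm

lemma exists_isPath_of_mem {x : ℤ → A} (hx : x ∈ G.Sigma') :
    ∃ p, G.IsPath p ∧ G.pointAt p 0 = x :=
  let ⟨_, p, hp⟩ := hx
  ⟨p, hp.isPath, hp.pointAt_eq⟩

lemma shift_pointAt (k : ℤ) : shift (G.pointAt p k) = G.pointAt p (k + 1) :=
  funext fun i => by simp only [shift, pointAt, add_assoc, add_comm 1 k]

lemma iterate_shift_pointAt (n : ℕ) : shift^[n] (G.pointAt p 0) = G.pointAt p n :=
  funext fun i => by simp [shift_iterate_apply, pointAt]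

end Paths

def splice (p : ℤ → G.E) (c : ℤ) (r : ℕ → G.E) (i : ℤ) : G.E :=
  if i < c then p i else r (i - c).toNat

section Splice

variable {p : ℤ → G.E} {r : ℕ → G.E} {c : ℤ}

lemma splice_of_lt {i : ℤ} (hi : i < c) : splice p c r i = p i := if_pos hi

lemma splice_add (i : ℕ) : splice p c r (c + i) = r i := by
  simp [splice]

lemma IsPath.splice (hp : G.IsPath p) (hr : G.IsRay r) (hc : G.s (r 0) = G.s (p c)) :
    G.IsPath (splice p c r) := fun i => by
  rcases lt_trichotomy (i + 1) c with hi | hi | hi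
  · rw [splice_of_lt hi, splice_of_lt (by omega), hp]
  · rw [splice_of_lt (by omega), hp, hi, ← hc, ← splice_add (p := p) (c := c) (r := r) 0,
      Nat.cast_zero, add_zero]
  · obtain ⟨k, rfl⟩ : ∃ k : ℕ, i = c + k := ⟨(i - c).toNat, by omega⟩
    rw [show c + k + 1 = c + ((k + 1 : ℕ) : ℤ) by push_cast; ring, splice_add, splice_add, hr]

end Splice

def cyclePath (es : List G.E) (hes : es ≠ []) (i : ℤ) : G.E :=
  es[(i % es.length).toNat]'(by
    have hlen : (0 : ℤ) < es.length := by simpa [List.length_pos_iff] using hes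
    have := Int.emod_lt_of_pos i hlen
    have := Int.emod_nonneg i hlen.ne'
    omega)

section Cycle

variable {es : List G.E} {hes : es ≠ []}

lemma cyclePath_natCast {i : ℕ} (hi : i < es.length) : cyclePath es hes i = es[i] := by
  simp only [cyclePath, Int.emod_eq_of_lt (Int.natCast_nonneg i) (Int.ofNat_lt.2 hi),
    Int.toNat_natCast]

lemma cyclePath_add_length (i : ℤ) : cyclePath es hes (i + es.length) = cyclePath es hes i := by
  simp [cyclePath]

lemma Walk.s_cyclePath_zero {c : G.V} (h : G.Walk c c es) : G.s (cyclePath es hes 0) = c := by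
  have hlen : 0 < es.length := List.length_pos_iff.2 hes
  rw [← Nat.cast_zero, cyclePath_natCast hlen, h.s_getElem_zero hlen]

lemma Walk.isPath_cyclePath {c : G.V} (h : G.Walk c c es) : G.IsPath (cyclePath es hes) := by
  intro i
  have hlen : (0 : ℤ) < es.length := by simpa [List.length_pos_iff] using hes
  have h₀ := Int.emod_nonneg i hlen.ne'
  have h₁ := Int.emod_lt_of_pos i hlen
  have hsucc : (i + 1) % es.length =
      if i % es.length + 1 < es.length then i % es.length + 1 else 0 := by
    rw [← Int.emod_add_emod]
    split_ifs with h'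
    · exact Int.emod_eq_of_lt (by omega) h'
    · rw [show i % es.length + 1 = es.length by omega, Int.emod_self]
  simp only [cyclePath]
  rw [h.t_getElem]
  by_cases h' : (i % es.length).toNat + 1 < es.length
  · rw [dif_pos h']
    congr 2
    rw [hsucc, if_pos (by omega)]
    omega
  · rw [dif_neg h', ← h.s_getElem_zero (by omega)]
    congr 2
    rw [hsucc, if_neg (by omega)]
    rfl

lemma lab_cyclePath_append {es fs : List G.E} {hne : es ++ fs ≠ []} {w : List A}
    (hes : es.map G.lab = w) {i : ℕ} (hi : i < w.length) :
    G.lab (cyclePath (es ++ fs) hne i) = w[i] := by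
  subst hes
  rw [List.length_map] at hi
  rw [cyclePath_natCast (by simp; omega), List.getElem_append_left hi, List.getElem_map]

end Cycle

section Chains

variable {l : ℕ} {p q : ℤ → G.E}

lemma IsPath.chainStep_succ (hp : G.IsPath p) (k : ℤ) :
    ChainStep G.Sigma' l (G.pointAt p k) (G.pointAt p (k + 1)) :=
  ⟨hp.pointAt_mem k, hp.pointAt_mem (k + 1), fun _ _ => by rw [shift_pointAt]⟩

lemma IsPath.reflTransGen_pointAt (hp : G.IsPath p) {j k : ℤ} (hjk : j ≤ k) :
    ReflTransGen (ChainStep G.Sigma' l) (G.pointAt p j) (G.pointAt p k) := by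
  obtain ⟨n, rfl⟩ := Int.exists_add_of_le hjk
  induction n with
  | zero => rw [Nat.cast_zero, add_zero]
  | succ n ih =>
    rw [Nat.cast_succ, ← add_assoc]
    exact (ih (by omega)).tail (hp.chainStep_succ _)

lemma IsPath.transGen_pointAt (hp : G.IsPath p) {j k : ℤ} (hjk : j < k) :
    TransGen (ChainStep G.Sigma' l) (G.pointAt p j) (G.pointAt p k) :=
  .head' (hp.chainStep_succ j) (hp.reflTransGen_pointAt (by omega))

lemma chainStep_of_eqOn (hp : G.IsPath p) (hq : G.IsPath q) {c c' : ℤ}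
    (h : ∀ t : ℤ, t.natAbs ≤ l → G.lab (p (c + t)) = G.lab (q (c' + t))) :
    ChainStep G.Sigma' l (G.pointAt p (c - 1)) (G.pointAt q c') :=
  ⟨hp.pointAt_mem _, hq.pointAt_mem _, fun i hi => by
    rw [shift_pointAt, sub_add_cancel]
    simpa [pointAt, add_comm] using h i hi⟩

lemma transGen_of_eqOn (hp : G.IsPath p) (hq : G.IsPath q) {c c' : ℤ}
    (h : ∀ t : ℤ, t.natAbs ≤ l → G.lab (p (c + t)) = G.lab (q (c' + t))) {j k : ℤ}
    (hj : j < c) (hk : c' ≤ k) :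
    TransGen (ChainStep G.Sigma' l) (G.pointAt p j) (G.pointAt q k) :=
  .trans_right (hp.reflTransGen_pointAt (by omega)) <|
    .head' (chainStep_of_eqOn hp hq h) (hq.reflTransGen_pointAt hk)

end Chains

/-- Only the future of a path is prescribed, so that the ray can be spliced onto any path
through `u`. -/
def LeadsTo (G : LGraph A) (l : ℕ) (y : ℤ → A) (u : G.V) : Prop :=
  ∃ r : ℕ → G.E, G.IsRay r ∧ G.s (r 0) = u ∧ ∀ p, G.IsPath p → ∀ k : ℤ,
    (∀ i : ℕ, p (k + i) = r i) → TransGen (ChainStep G.Sigma' l) (G.pointAt p k) y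

section LeadsTo

variable {l : ℕ} {y : ℤ → A}

lemma IsPath.leadsTo {q : ℤ → G.E} (hq : G.IsPath q) {M : ℤ} (hM : M + l + 1 ≤ 0) :
    G.LeadsTo l (G.pointAt q 0) (G.s (q M)) := by
  refine ⟨fun i => q (M + i), hq.isRay M, by simp, fun p hp k hpk => ?_⟩
  refine transGen_of_eqOn hp hq (c := k + l + 1) (c' := M + l + 1) (fun t ht => ?_)
    (by omega) hM
  obtain ⟨i, hi⟩ : ∃ i : ℕ, (i : ℤ) = l + 1 + t := ⟨(l + 1 + t).toNat, by omega⟩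
  rw [show k + l + 1 + t = k + i by omega, show M + l + 1 + t = M + i by omega, hpk]

lemma LeadsTo.of_edgeRel {u c : G.V} (huc : G.EdgeRel u c) (h : G.LeadsTo l y c) :
    G.LeadsTo l y u := by
  obtain ⟨f, rfl, rfl⟩ := huc
  obtain ⟨r, hr, hr₀, hry⟩ := h
  refine ⟨fun | 0 => f | i + 1 => r i, fun | 0 => hr₀.symm | i + 1 => hr i, rfl,
    fun p hp k hpk => .head (hp.chainStep_succ k) (hry p hp (k + 1) fun i => ?_)⟩
  simpa [add_assoc, add_comm 1 (i : ℤ)] using hpk (i + 1)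

lemma LeadsTo.of_linked {u c : G.V} (huc : G.Linked u c) (h : G.LeadsTo l y c) :
    G.LeadsTo l y u := by
  obtain ⟨r', hr', hr'₀, hry⟩ := h
  obtain ⟨w, ⟨hwu, hwc⟩, hw⟩ := huc.exists_le_length (2 * l + 2)
  obtain ⟨es, fs, hcu, hes⟩ := exists_closed_walk_of_mem_followR hwu
  obtain ⟨es', fs', hcc, hes'⟩ := exists_closed_walk_of_mem_followR hwc
  have hlen : w.length = es.length := by rw [← hes, List.length_map]
  have hlen' : w.length = es'.length := by rw [← hes', List.length_map]
  have hne : es ++ fs ≠ [] := List.ne_nil_of_length_pos (by simp; omega)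
  have hne' : es' ++ fs' ≠ [] := List.ne_nil_of_length_pos (by simp; omega)
  refine ⟨fun i => cyclePath (es ++ fs) hne i, by simpa using hcu.isPath_cyclePath.isRay 0,
    hcu.s_cyclePath_zero, fun p hp k hpk => ?_⟩
  -- `hs`: the path around the closed walk at `c` from time `k` on, then along `r'`
  set L := (es' ++ fs').length
  have hq := (hcc.isPath_cyclePath (hes := hne')).comp_add (-k)
  have hq₀ : G.s (r' 0) = G.s (cyclePath (es' ++ fs') hne' (k + L + -k)) := by
    rw [add_neg_cancel_comm, ← zero_add (L : ℤ), cyclePath_add_length, hcc.s_cyclePath_zero,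
      hr'₀]
  have hs := hq.splice hr' hq₀
  refine .trans (transGen_of_eqOn hp hs (c := k + l + 1) (c' := k + l + 1) (fun t ht => ?_)
    (by omega) (by simp [L]; omega)) (hry _ hs (k + L) splice_add)
  obtain ⟨i, hi⟩ : ∃ i : ℕ, (i : ℤ) = l + 1 + t := ⟨(l + 1 + t).toNat, by omega⟩
  have hiw : i < w.length := by omega
  rw [show k + l + 1 + t = k + i by omega, hpk, splice_of_lt (by simp [L]; omega),
    add_neg_cancel_comm, lab_cyclePath_append hes hiw, lab_cyclePath_append hes' hiw]

lemma LeadsTo.of_genReach {u c : G.V} (huc : G.GenReach u c) (h : G.LeadsTo l y c) :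
    G.LeadsTo l y u := by
  induction huc using ReflTransGen.head_induction_on with
  | refl => exact h
  | head hstep _ ih => exact hstep.elim ih.of_edgeRel ih.of_linked

lemma LeadsTo.transGen {p : ℤ → G.E} (hp : G.IsPath p) {c j : ℤ}
    (h : G.LeadsTo l y (G.s (p c))) (hj : j + l + 1 < c) :
    TransGen (ChainStep G.Sigma' l) (G.pointAt p j) y := by
  obtain ⟨r, hr, hr₀, hry⟩ := h
  have hs := hp.splice hr hr₀
  refine .trans (transGen_of_eqOn hp hs (c := c - l - 1) (c' := c - l - 1) (fun t ht => ?_)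
    (by omega) (by omega : c - l - 1 ≤ c)) (hry _ hs c splice_add)
  rw [splice_of_lt (by omega)]

end LeadsTo

theorem chainRel_of_genReach {p q : ℤ → G.E} (hp : G.IsPath p) (hq : G.IsPath q)
    (h : ∀ L : ℕ, ∃ i j : ℤ, L ≤ i ∧ j + L ≤ 0 ∧
      G.GenReach (G.s (p i)) (G.s (q j))) :
    ChainRel G.Sigma' (G.pointAt p 0) (G.pointAt q 0) :=
  chainRel_of_forall_transGen fun l => by
    obtain ⟨i, j, hi, hj, hij⟩ := h (l + 2)
    exact ((hq.leadsTo (by omega)).of_genReach hij).transGen hp (by omega)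

theorem IsPath.chainRel_iterate_shift {p : ℤ → G.E} (hp : G.IsPath p) {n : ℕ} (hn : 0 < n) :
    ChainRel G.Sigma' (G.pointAt p 0) (shift^[n] (G.pointAt p 0)) :=
  chainRel_of_forall_transGen fun _ => by
    rw [iterate_shift_pointAt]
    exact hp.transGen_pointAt (by omega)

lemma IsPath.exists_reach_tail {p : ℤ → G.E} (hp : G.IsPath p) :
    ∃ N, ∀ i j, N ≤ i → N ≤ j → G.Reach (G.s (p i)) (G.s (p j)) := by
  obtain ⟨N, hN⟩ := exists_frequently_eq fun i => G.s (p i)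
  refine ⟨N, fun i j hi hj => ?_⟩
  obtain ⟨k, hik, hk⟩ := hN i
  exact (hp.reach hik).trans (hk ▸ hp.reach hj)

lemma IsPath.exists_reach_head {p : ℤ → G.E} (hp : G.IsPath p) :
    ∃ M, ∀ i j, i ≤ M → j ≤ M → G.Reach (G.s (p i)) (G.s (p j)) := by
  obtain ⟨M, hM⟩ := exists_frequently_eq fun i => G.s (p (-i))
  refine ⟨-M, fun i j hi hj => ?_⟩
  obtain ⟨k, hjk, hk⟩ := hM (-j)
  exact (hp.reach hi).trans (hk ▸ hp.reach (by omega))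

def segment (p : ℤ → G.E) : ℤ → ℕ → List G.E
  | _, 0 => []
  | a, n + 1 => p a :: segment p (a + 1) n

section Segment

variable {p q : ℤ → G.E}

lemma mem_segment {a : ℤ} {n : ℕ} {f : G.E} (hf : f ∈ segment p a n) :
    ∃ t, a ≤ t ∧ t < a + n ∧ f = p t := by
  induction n generalizing a with
  | zero => simp [segment] at hf
  | succ n ih =>
    rcases List.mem_cons.1 hf with rfl | hf
    · exact ⟨a, le_rfl, by omega, rfl⟩
    · obtain ⟨t, ht₁, ht₂, rfl⟩ := ih hf
      exact ⟨t, by omega, by omega, rfl⟩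

lemma length_map_lab_segment (a : ℤ) (n : ℕ) : ((segment p a n).map G.lab).length = n := by
  induction n generalizing a with
  | zero => rfl
  | succ n ih => simp [segment, ih]

lemma map_lab_segment_congr {a : ℤ} {n : ℕ}
    (h : ∀ t, a ≤ t → t < a + n → G.lab (p t) = G.lab (q t)) :
    (segment p a n).map G.lab = (segment q a n).map G.lab := by
  induction n generalizing a with
  | zero => rfl
  | succ n ih =>
    simp only [segment, List.map_cons]
    rw [h a le_rfl (by omega), ih fun t ht₁ ht₂ => h t (by omega) (by omega)]

lemma IsPath.walk_segment (hp : G.IsPath p) (a : ℤ) (n : ℕ) :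
    G.Walk (G.s (p a)) (G.s (p (a + n))) (segment p a n) := by
  induction n generalizing a with
  | zero =>
    rw [Nat.cast_zero, add_zero]
    exact .nil _
  | succ n ih =>
    refine Walk.cons (p a) ?_
    rw [hp, show a + (n + 1 : ℕ) = a + 1 + n by push_cast; ring]
    exact ih (a + 1)

lemma IsPath.map_lab_segment_mem_followR (hp : G.IsPath p) {a : ℤ} {n : ℕ}
    (h : G.SameComp (G.s (p a)) (G.s (p (a + n)))) :
    (segment p a n).map G.lab ∈ G.FollowR (G.s (p a)) := by
  have hcomp : ∀ t, a ≤ t → t ≤ a + n → G.SameComp (G.s (p a)) (G.s (p t)) :=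
    fun t ht₁ ht₂ => ⟨hp.reach ht₁, (hp.reach ht₂).trans h.2⟩
  refine ⟨_, _, hp.walk_segment a n, rfl, fun f hf => ?_⟩
  obtain ⟨t, ht₁, ht₂, rfl⟩ := mem_segment hf
  exact ⟨hcomp t ht₁ (by omega), hp t ▸ hcomp (t + 1) (by omega) (by omega)⟩

end Segment

lemma card_filter_not_sameComp_le {u : ℕ → G.V} (hu : ∀ i j, i ≤ j → G.Reach (u i) (u j))
    (K : ℕ) [DecidablePred fun k => ¬ G.SameComp (u k) (u (k + 1))] :
    ((Finset.range K).filter fun k => ¬ G.SameComp (u k) (u (k + 1))).card ≤ Nat.card G.V := by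
  have := Fintype.ofFinite G.V
  rw [Nat.card_eq_fintype_card, ← Finset.card_univ]
  -- once a walk leaves a strongly connected component it never comes back
  refine Finset.card_le_card_of_injOn (fun k => u (k + 1)) (fun _ _ => Finset.mem_coe.2
    (Finset.mem_univ _)) fun i hi j hj hij => ?_
  by_contra hne
  wlog hlt : i < j generalizing i j
  · exact this j hj i hi hij.symm (Ne.symm hne) (by omega)
  refine (Finset.mem_filter.1 hj).2 ⟨hu _ _ (by omega), ?_⟩
  rw [← show u (i + 1) = u (j + 1) from hij]
  exact hu _ _ (by omega)

lemma exists_length_lt_of_not_linked :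
    ∃ m, ∀ a b : G.V, ¬ G.Linked a b →
      ∀ w ∈ G.FollowR a ∩ G.FollowR b, w.length < m := by
  have hfin : (⋃ ab : {ab : G.V × G.V // ¬ G.Linked ab.1 ab.2},
      G.FollowR ab.1.1 ∩ G.FollowR ab.1.2).Finite :=
    Set.finite_iUnion fun ab => Set.not_infinite.1 ab.2
  obtain ⟨m, hm⟩ := (hfin.image List.length).bddAbove
  exact ⟨m + 1, fun a b hab w hw =>
    Nat.lt_succ_of_le (hm ⟨w, Set.mem_iUnion.2 ⟨⟨(a, b), hab⟩, hw⟩, rfl⟩)⟩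

def SyncBound (G : LGraph A) (S : Set G.V) (D : ℕ) : Prop :=
  ∀ p q : ℤ → G.E, G.IsPath p → G.IsPath q → ∀ a : ℤ,
    (∀ t, a ≤ t → t < a + D → G.lab (p t) = G.lab (q t)) →
    G.s (p a) ∈ S → G.s (q (a + D)) ∈ S

lemma exists_syncBound {S : Set G.V} (hS : ∀ a b, G.GenReach a b → a ∈ S → b ∈ S) :
    ∃ D, G.SyncBound S D := by
  classical
  obtain ⟨m, hm⟩ := G.exists_length_lt_of_not_linked
  set K := 2 * Nat.card G.V + 1
  refine ⟨K * m, fun p q hp hq a hpq ha => ?_⟩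
  -- Cut `[a, a + K * m)` into `K` blocks of length `m`: a path changes its strongly connected
  -- component at most `|V|` times, so on some block both paths stay inside one component.
  have hblock {r : ℤ → G.E} (hr : G.IsPath r) (i j : ℕ) (hij : i ≤ j) :
      G.Reach (G.s (r (a + (i * m : ℕ)))) (G.s (r (a + (j * m : ℕ)))) :=
    hr.reach (by have := Nat.mul_le_mul_right m hij; omega)
  have hcard := (Finset.card_union_le _ _).trans_lt <|
    (add_le_add (card_filter_not_sameComp_le (hblock hp) K)
      (card_filter_not_sameComp_le (hblock hq) K)).trans_lt
      (show Nat.card G.V + Nat.card G.V < (Finset.range K).card by simp [K]; omega)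
  obtain ⟨k, hk, hgood⟩ := Finset.exists_mem_notMem_of_card_lt_card hcard
  simp only [Finset.mem_union, Finset.mem_filter, not_or, not_and, not_not] at hgood
  have hkK := Finset.mem_range.1 hk
  have hkm : (k + 1) * m ≤ K * m := Nat.mul_le_mul_right m hkK
  have hsucc : (k + 1) * m = k * m + m := Nat.succ_mul k m
  set t := a + (k * m : ℕ)
  have hend : a + ((k + 1) * m : ℕ) = t + m := by push_cast [hsucc, t]; ring
  have hw := hp.map_lab_segment_mem_followR (n := m) (hend ▸ hgood.1 hk)
  have hw' := hq.map_lab_segment_mem_followR (n := m) (hend ▸ hgood.2 hk)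
  have hlink : G.Linked (G.s (p t)) (G.s (q t)) := by
    by_contra hnl
    rw [← map_lab_segment_congr (a := t) (n := m)
      fun i hi₁ hi₂ => hpq i (by omega) (by omega)] at hw'
    exact (hm _ _ hnl _ ⟨hw, hw'⟩).ne (length_map_lab_segment t m)
  have hpt : G.s (p t) ∈ S := hS _ _ (genReach_of_reach (hp.reach (by omega))) ha
  exact hS _ _ ((ReflTransGen.single (Or.inr hlink) : G.GenReach _ _).trans
    (genReach_of_reach (hq.reach (i := t) (j := a + (K * m : ℕ)) (by omega)))) hpt

def EnteredBy (G : LGraph A) (S : Set G.V) (z : ℤ → A) (T : ℤ) : Prop :=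
  ∀ p, G.IsPath p → G.pointAt p 0 = z → G.s (p T) ∈ S

section EnteredBy

variable {S : Set G.V} {D : ℕ} {z : ℤ → A} {T : ℤ}

lemma EnteredBy.mono (hS : ∀ a b, G.GenReach a b → a ∈ S → b ∈ S) (h : G.EnteredBy S z T)
    {T' : ℤ} (hT : T ≤ T') : G.EnteredBy S z T' :=
  fun p hp hpz => hS _ _ (genReach_of_reach (hp.reach hT)) (h p hp hpz)

lemma EnteredBy.of_eqOn (hD : G.SyncBound S D) (hz : z ∈ G.Sigma') (h : G.EnteredBy S z T)
    {w : ℤ → A} {k : ℤ} (hw : ∀ t, T ≤ t → t < T + D → w (t - k) = z t) :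
    G.EnteredBy S w (T + D - k) := by
  intro q hq hqw
  obtain ⟨p, hp, rfl⟩ := exists_isPath_of_mem hz
  have hsync := hD _ q (hp.comp_add k) hq (T - k) (fun t ht₁ ht₂ => ?_)
    (by simpa using h p hp rfl)
  · rwa [sub_add_eq_add_sub] at hsync
  · have := hw (t + k) (by omega) (by omega)
    rw [add_sub_cancel_right, ← hqw] at this
    simpa [pointAt] using this.symm

lemma enteredBy_of_chain (hS : ∀ a b, G.GenReach a b → a ∈ S → b ∈ S)
    (hD : G.SyncBound S D) {z : ℕ → ℤ → A} {n l : ℕ}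
    (hzmem : ∀ i ≤ n, z i ∈ G.Sigma')
    (hz : ∀ i < n, ∀ t : ℤ, t.natAbs ≤ l → z (i + 1) t = z i (t + 1))
    (h₀ : G.EnteredBy S (z 0) T) (hTl : T + D ≤ l) (hDl : D ≤ l) :
    G.EnteredBy S (z n) (max (T - (n / (D + 1) : ℕ)) (D + 1 - l) + D) := by
  -- `k ≤ D + 1` links of the chain cost `D` steps of synchronisation and gain `k` steps of time
  have step (i k : ℕ) (hik : i + k ≤ n) (hk : k ≤ D + 1) (T' : ℤ) (h₁ : D + 1 - l ≤ T')
      (h₂ : T' + D ≤ l + 1) (hT' : G.EnteredBy S (z i) T') :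
      G.EnteredBy S (z (i + k)) (T' + D - k) :=
    hT'.of_eqOn hD (hzmem i (by omega)) fun t ht₁ ht₂ => by
      rw [chain_apply_add hz hik (by omega) (by omega), sub_add_cancel]
  have blocks (m : ℕ) (hm : m * (D + 1) ≤ n) :
      G.EnteredBy S (z (m * (D + 1))) (max (T - m) (D + 1 - l)) := by
    induction m with
    | zero => simpa using h₀.mono hS (le_max_left _ _)
    | succ m ih =>
      rw [Nat.succ_mul] at hm ⊢
      exact (step _ _ hm le_rfl _ (le_max_right _ _) (by omega)
        (ih (by omega))).mono hS (by omega)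
  have hdiv := Nat.div_add_mod' n (D + 1)
  have hrem := Nat.mod_lt n (show 0 < D + 1 by omega)
  generalize n / (D + 1) = d at hdiv ⊢
  generalize n % (D + 1) = r at hdiv hrem
  have hzn := step (d * (D + 1)) r (by omega) hrem.le _ (le_max_right _ _) (by omega)
    (blocks d (by omega))
  rw [hdiv] at hzn
  exact hzn.mono hS (by omega)

end EnteredBy

theorem exists_iterate_shift_eq_of_chainRel {p q : ℤ → G.E} (hp : G.IsPath p) (hq : G.IsPath q)
    {S : Set G.V} (hS : ∀ a b, G.GenReach a b → a ∈ S → b ∈ S) {N M : ℤ}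
    (hN : G.s (p N) ∈ S) (hM : G.s (q M) ∉ S)
    (h : ChainRel G.Sigma' (G.pointAt p 0) (G.pointAt q 0)) :
    ∃ n, 0 < n ∧ shift^[n] (G.pointAt p 0) = G.pointAt q 0 := by
  obtain ⟨D, hD⟩ := exists_syncBound hS
  have hx : G.EnteredBy S (G.pointAt p 0) (N + D) := fun p' hp' hp'p =>
    hD p p' hp hp' N (fun t _ _ => by simpa [pointAt] using (congrFun hp'p t).symm) hN
  -- a chain of length `≥ K` would carry `S` back to time `M` on `q`
  set K := (D + 1) * (N + 2 * D - M).toNat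
  refine exists_iterate_shift_eq (K := K) fun L => ?_
  set l := L + K + D + (N + 2 * D).toNat + (2 * D + 1 - M).toNat with hl
  obtain ⟨n, hn, z, hz0, hzn, hzmem, hzρ⟩ := h (2 ^ (-(l : ℤ))) (by positivity)
  have hz : ∀ i < n, ∀ t : ℤ, t.natAbs ≤ l → z (i + 1) t = z i (t + 1) := fun i hi t ht =>
    (rho_lt_two_zpow_iff.1 (hzρ i hi) t ht).symm
  have hnK : n < K := by
    by_contra! hKn
    have hdiv : (N + 2 * D - M).toNat ≤ n / (D + 1) :=
      (Nat.le_div_iff_mul_le (by omega)).2 (by rw [mul_comm]; exact hKn)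
    have hy := enteredBy_of_chain hS hD hzmem hz (hz0 ▸ hx) (by omega) (by omega)
    generalize n / (D + 1) = d at hy hdiv
    exact hM (hy.mono hS (by omega) q hq hzn.symm)
  refine ⟨n, hn, hnK, fun t ht => ?_⟩
  have := chain_apply_add hz (i := 0) (k := n) (by omega) (t := t) (by omega) (by omega)
  rwa [zero_add, hz0, hzn] at this

end LGraph

theorem stmt9_general {A : Type} (G : LGraph A)
    (x y : ℤ → A) (hx : x ∈ G.Sigma') (hy : y ∈ G.Sigma') :
    ChainRel G.Sigma' x y ↔
      ((∃ (v : ℤ → G.V) (e : ℤ → G.E) (v' : ℤ → G.V) (e' : ℤ → G.E),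
          G.BiPresIn Set.univ x v e ∧ G.BiPresIn Set.univ y v' e' ∧
          ∃ N M : ℤ,
            (∀ i j : ℤ, N ≤ i → N ≤ j → G.GenReach (v i) (v j)) ∧
            (∀ i j : ℤ, i ≤ M → j ≤ M → G.GenReach (v' i) (v' j)) ∧
            G.GenReach (v N) (v' M)) ∨
        ∃ n : ℕ, 0 < n ∧ shift^[n] x = y) := by
  obtain ⟨p, hp, rfl⟩ := LGraph.exists_isPath_of_mem hx
  constructor
  · intro hxy
    obtain ⟨q, hq, rfl⟩ := LGraph.exists_isPath_of_mem hy
    obtain ⟨N, hN⟩ := hp.exists_reach_tail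
    obtain ⟨M, hM⟩ := hq.exists_reach_head
    by_cases hNM : G.GenReach (G.s (p N)) (G.s (q M))
    · exact .inl ⟨_, p, _, q, hp.biPresIn, hq.biPresIn, N, M,
        fun i j hi hj => LGraph.genReach_of_reach (hN i j hi hj),
        fun i j hi hj => LGraph.genReach_of_reach (hM i j hi hj), hNM⟩
    · exact .inr (LGraph.exists_iterate_shift_eq_of_chainRel hp hq
        (S := {b | G.GenReach (G.s (p N)) b}) (fun _ _ hab ha => ha.trans hab) .refl hNM hxy)
  · rintro (⟨v, e, v', e', hx', hy', N, M, hN, hM, hNM⟩ | ⟨n, hn, rfl⟩)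
    · rw [← hx'.pointAt_eq, ← hy'.pointAt_eq]
      refine LGraph.chainRel_of_genReach hx'.isPath hy'.isPath fun L =>
        ⟨max N L, min M (-L), le_max_right _ _, by omega, ?_⟩
      rw [← congrFun hx'.vertex_eq, ← congrFun hy'.vertex_eq]
      exact (hN _ _ (le_max_left _ _) le_rfl).trans
        (hNM.trans (hM _ _ le_rfl (min_le_left _ _)))
    · exact hp.chainRel_iterate_shift hn

theorem stmt9 {A : Type} [Finite A] (G : LGraph A)
    (x y : ℤ → A) (hx : x ∈ G.Sigma') (hy : y ∈ G.Sigma') :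
    ChainRel G.Sigma' x y ↔
      ((∃ (v : ℤ → G.V) (e : ℤ → G.E) (v' : ℤ → G.V) (e' : ℤ → G.E),
          G.BiPresIn Set.univ x v e ∧ G.BiPresIn Set.univ y v' e' ∧
          ∃ N M : ℤ,
            (∀ i j : ℤ, N ≤ i → N ≤ j → G.GenReach (v i) (v j)) ∧
            (∀ i j : ℤ, i ≤ M → j ≤ M → G.GenReach (v' i) (v' j)) ∧
            G.GenReach (v N) (v' M)) ∨
        ∃ n : ℕ, 0 < n ∧ shift^[n] x = y) :=
  stmt9_general G x y hx hy
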